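/- Let M be a commutative monoid, Σ a signature, and μ̄ : X → M^(Σ X) a coalgebra. For an equivalence relation R on X with quotient map e : X → X/R, the following are equivalent: (1) R is a backward bisimulation, i.e. for all (p, q) ∈ R, every operation symbol σ of arity k, and every k-tuple (D₁, …, D_k) of R-equivalence classes, ∑_{w ∈ D₁ × ⋯ × D_k} μ̄(p)(σ(w)) = ∑_{w ∈ D₁ × ⋯ × D_k} μ̄(q)(σ(w)); (2) there exists a map r : X/R → M^(Σ (X/R)) such that r ∘ e = M^(Σ e) ∘ μ̄, i.e. e is a coalgebra homomorphism. -/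
import Mathlib


/-- The action of the polynomial functor of a signature (with operation symbols `S` and
arity function `ar`) on a map `h : X → Y`: `σ(x₁,…,x_k) ↦ σ(h x₁,…,h x_k)`. -/
def PolyMap {S : Type*} (ar : S → ℕ) {X Y : Type*} (h : X → Y)
    (t : (σ : S) × (Fin (ar σ) → X)) : (σ : S) × (Fin (ar σ) → Y) :=
  ⟨t.1, h ∘ t.2⟩

lemma polymap_key {M : Type*} [AddCommMonoid M] {S X Y : Type*} (ar : S → ℕ)
    (v : ((σ : S) × (Fin (ar σ) → X)) →₀ M) (e : X → Y)
    (σ : S) (L : Fin (ar σ) → Y) :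
    (∑ᶠ (w : Fin (ar σ) → X) (_ : ∀ i, e (w i) = L i), v ⟨σ, w⟩)
      = Finsupp.mapDomain (PolyMap ar e) v ⟨σ, L⟩ := by
  classical
  have hinj : Function.Injective
      (fun w : Fin (ar σ) → X => (⟨σ, w⟩ : (σ : S) × (Fin (ar σ) → X))) :=
    fun a b h => by simpa using h
  have hmap : Finsupp.mapDomain (PolyMap ar e) v ⟨σ, L⟩
      = ∑ t ∈ v.support, if PolyMap ar e t = ⟨σ, L⟩ then v t else 0 := by
    rw [Finsupp.mapDomain, Finsupp.sum_apply]
    simp [Finsupp.sum, Finsupp.single_apply]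
  have hfs : ∀ w : Fin (ar σ) → X,
      (∑ᶠ (_ : ∀ i, e (w i) = L i), v ⟨σ, w⟩)
        = if (∀ i, e (w i) = L i) then v ⟨σ, w⟩ else 0 := by
    intro w
    exact finsum_eq_if
  simp only [hfs]
  have hsub : (Function.support fun w : Fin (ar σ) → X =>
      if (∀ i, e (w i) = L i) then v ⟨σ, w⟩ else 0)
      ⊆ (v.support.preimage (fun w => ⟨σ, w⟩) (Set.injOn_of_injective hinj)) := by
    intro w hw
    simp only [Function.mem_support] at hw
    simp only [Finset.coe_preimage, Set.mem_preimage, Finset.mem_coe,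
      Finsupp.mem_support_iff]
    intro h0
    apply hw
    split_ifs <;> simp [h0]
  rw [finsum_eq_sum_of_support_subset _ hsub, hmap]
  rw [← Finset.sum_preimage (fun w : Fin (ar σ) → X =>
      (⟨σ, w⟩ : (σ' : S) × (Fin (ar σ') → X)))
    v.support (Set.injOn_of_injective hinj)
    (fun t => if PolyMap ar e t = ⟨σ, L⟩ then v t else 0)]
  · apply Finset.sum_congr rfl
    intro w _
    congr 1
    simp only [PolyMap, Sigma.mk.inj_iff, heq_eq_eq, true_and, eq_iff_iff]
    exact ⟨fun h => funext h, fun h i => congrFun h i⟩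
  · intro t ht hrange
    have : t.1 ≠ σ := by
      intro h
      apply hrange
      cases t with
      | mk a b => subst h; exact ⟨b, rfl⟩
    rw [if_neg]
    intro h
    exact this (congrArg Sigma.fst h)

/-- For a coalgebra `μ : X → M^(Σ X)` and an equivalence relation (setoid) `s` on `X`
with quotient map `e = Quotient.mk s`, the following are equivalent:
(1) `s` is a backward bisimulation: for all related `p, q`, every operation symbol `σ`
of arity `k` and every `k`-tuple `L` of equivalence classes,
`∑_{w, e∘w = L} μ(p)(σ(w)) = ∑_{w, e∘w = L} μ(q)(σ(w))`;
(2) there is `r : X/s → M^(Σ(X/s))` with `r ∘ e = M^(Σ e) ∘ μ`, i.e. `e` is a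
coalgebra homomorphism. -/
theorem stmt5 {M : Type*} [AddCommMonoid M] {S X : Type*} (ar : S → ℕ)
    (μ : X → ((σ : S) × (Fin (ar σ) → X)) →₀ M) (s : Setoid X) :
    (∀ p q : X, s.r p q →
        ∀ (σ : S) (L : Fin (ar σ) → Quotient s),
          (∑ᶠ (w : Fin (ar σ) → X) (_ : ∀ i, Quotient.mk s (w i) = L i), μ p ⟨σ, w⟩)
            = ∑ᶠ (w : Fin (ar σ) → X) (_ : ∀ i, Quotient.mk s (w i) = L i), μ q ⟨σ, w⟩)
      ↔ ∃ r : Quotient s → ((σ : S) × (Fin (ar σ) → Quotient s)) →₀ M,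
          ∀ x : X, r (Quotient.mk s x)
            = Finsupp.mapDomain (PolyMap ar (Quotient.mk s)) (μ x) := by
  constructor
  · intro h
    refine ⟨Quotient.lift (fun x => Finsupp.mapDomain (PolyMap ar (Quotient.mk s)) (μ x))
      ?_, fun x => rfl⟩
    intro a b hab
    ext ⟨σ, L⟩
    rw [← polymap_key, ← polymap_key]
    exact h a b hab σ L
  · rintro ⟨r, hr⟩ p q hpq σ L
    rw [polymap_key, polymap_key, ← hr, ← hr, Quotient.sound hpq]
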